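/- Let ℒ ⊂ ℝ^d be a lattice of rank n and let ℒ' ⊆ ℒ be a primitive sublattice of rank ℓ. Then the duality map (ℒ, ℒ') ↦ (ℒ*, ℒ* ∩ (ℒ')^⊥) is an involution on (lattice, primitive-sublattice) pairs that preserves γ; that is, ℒ ∩ (ℒ* ∩ (ℒ')^⊥)^⊥ = ℒ' and γ(ℒ*, ℒ* ∩ (ℒ')^⊥) = γ(ℒ, ℒ'), where γ(ℒ, ℒ') := det(ℒ')/det(ℒ)^{ℓ/n}. -/

import Mathlib

open scoped RealInnerProductSpace BigOperators

noncomputable section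

/-- The set of integer linear combinations of `B 0, …, B (n-1)`. -/
def zspan {d n : ℕ} (B : Fin n → EuclideanSpace ℝ (Fin d)) : Set (EuclideanSpace ℝ (Fin d)) :=
  {x | ∃ c : Fin n → ℤ, x = ∑ i, (c i : ℝ) • B i}

/-- `L` is a lattice of rank `n`: the ℤ-span of `n` ℝ-linearly independent vectors. -/
def IsLattice {d : ℕ} (L : Set (EuclideanSpace ℝ (Fin d))) (n : ℕ) : Prop :=
  ∃ B : Fin n → EuclideanSpace ℝ (Fin d), LinearIndependent ℝ B ∧ L = zspan B

/-- The dual set `S* := {w ∈ span_ℝ S : ⟨w,y⟩ ∈ ℤ for all y ∈ S}`. -/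
def dualSet {d : ℕ} (S : Set (EuclideanSpace ℝ (Fin d))) : Set (EuclideanSpace ℝ (Fin d)) :=
  {w | w ∈ Submodule.span ℝ S ∧ ∀ y ∈ S, ∃ m : ℤ, ⟪w, y⟫ = (m : ℝ)}

/-- Orthogonal projection onto the orthogonal complement of `span_ℝ S`. -/
def projPerp {d : ℕ} (S : Set (EuclideanSpace ℝ (Fin d))) (x : EuclideanSpace ℝ (Fin d)) : EuclideanSpace ℝ (Fin d) :=
  (Submodule.orthogonalProjectionOnto (Submodule.span ℝ S)ᗮ x : EuclideanSpace ℝ (Fin d))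

/-- `det(ℒ) = √(det(BᵀB))`, computed from a basis `B` via its Gram matrix. -/
def gramDet {d n : ℕ} (B : Fin n → EuclideanSpace ℝ (Fin d)) : ℝ :=
  Real.sqrt (Matrix.det (Matrix.of fun i j => ⟪B i, B j⟫))

/-- The Gram–Schmidt orthogonalization `b̃ᵢ = Π_{{b₁,…,b_(i-1)}^⊥}(bᵢ)`. -/
def gsVec {d n : ℕ} (B : Fin n → EuclideanSpace ℝ (Fin d)) (i : Fin n) : EuclideanSpace ℝ (Fin d) :=
  projPerp (B '' {j | j < i}) (B i)

/-- The Gram–Schmidt coefficients `μ_(i,j) = ⟨b̃ᵢ, bⱼ⟩ / ‖b̃ᵢ‖²`. -/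
def mu {d n : ℕ} (B : Fin n → EuclideanSpace ℝ (Fin d)) (i j : Fin n) : ℝ :=
  ⟪gsVec B i, B j⟫ / ‖gsVec B i‖ ^ 2

/-- `B` is an LLL-reduced basis (with parameter δ = 3/4). -/
def IsLLLReduced {d n : ℕ} (B : Fin n → EuclideanSpace ℝ (Fin d)) : Prop :=
  LinearIndependent ℝ B ∧
  (∀ i j : Fin n, i < j → |mu B i j| ≤ 1 / 2) ∧
  (∀ (i : ℕ) (h : i + 1 < n),
    (3 / 4) * ‖gsVec B ⟨i, Nat.lt_of_succ_lt h⟩‖ ^ 2 ≤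
      ‖gsVec B ⟨i + 1, h⟩‖ ^ 2 +
        (mu B ⟨i, Nat.lt_of_succ_lt h⟩ ⟨i + 1, h⟩) ^ 2 * ‖gsVec B ⟨i, Nat.lt_of_succ_lt h⟩‖ ^ 2)


/-!
Choose a basis `C` of `ℒ` whose first `ℓ` vectors span `ℒ'`; primitivity is exactly what makes
this possible (Smith normal form). The dual family `C*`, biorthogonal to `C`, spans `ℒ*`, and
biorthogonality shows that `ℒ* ∩ ℒ'^⊥` is spanned by the last `n - ℓ` vectors of `C*` and that
`ℒ` meets their orthogonal complement exactly in `ℒ'`. The Gram matrix of `C*` is `G⁻¹`, where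
`G` is that of `C`, and the lower right block of `G⁻¹` is the inverse of the Schur complement of
the upper left block `G₁₁`. Hence `det ℒ* = (det ℒ)⁻¹` and
`det (ℒ* ∩ ℒ'^⊥) = det ℒ' / det ℒ`, which is the invariance of `γ`.
-/

open Submodule Set Matrix
open Module (Basis)

theorem Matrix.det_toBlocks₂₂_inv_fromBlocks_mul_det {m n α : Type*} [Fintype m] [Fintype n]
    [DecidableEq m] [DecidableEq n] [Field α] (A : Matrix m m α) (B : Matrix m n α)
    (C : Matrix n m α) (D : Matrix n n α) (hA : IsUnit A.det)
    (hG : IsUnit (fromBlocks A B C D).det) :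
    ((fromBlocks A B C D)⁻¹).toBlocks₂₂.det * (fromBlocks A B C D).det = A.det := by
  let := A.invertibleOfIsUnitDet hA
  have hdet := det_fromBlocks₁₁ A B C D
  let := (D - C * ⅟A * B).invertibleOfIsUnitDet (isUnit_of_mul_isUnit_right (hdet ▸ hG))
  let := (fromBlocks A B C D).invertibleOfIsUnitDet hG
  -- the lower right block of the inverse is the inverse of the Schur complement of `A`
  rw [← invOf_eq_nonsing_inv, invOf_fromBlocks₁₁_eq, toBlocks_fromBlocks₂₂, hdet, mul_left_comm,
    ← det_mul, invOf_mul_self, det_one, mul_one]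

theorem Module.Basis.span_range_subtype_comp {R M ι : Type*} [Semiring R] [AddCommMonoid M]
    [Module R M] {N : Submodule R M} (b : Basis ι R N) : span R (range (N.subtype ∘ b)) = N := by
  rw [range_comp, span_image, b.span_eq, map_subtype_top]

theorem Submodule.exists_basis_span_range_inl_eq {R M : Type*} [CommRing R] [IsDomain R]
    [IsPrincipalIdealRing R] [AddCommGroup M] [Module R M] {n ℓ : ℕ} (b : Basis (Fin n) R M)
    {N : Submodule R M} (bN : Basis (Fin ℓ) R N)
    (hN : ∀ (a : R) (x : M), a ≠ 0 → a • x ∈ N → x ∈ N) :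
    ∃ c : Basis (Fin ℓ ⊕ Fin (n - ℓ)) R M, span R (range (c ∘ Sum.inl)) = N := by
  obtain ⟨k, o, hko, bO, bN', a, hsnf⟩ := N.exists_smith_normal_form_of_le b ⊤ le_top
  set bM := bO.map (LinearEquiv.ofTop ⊤ rfl)
  have hsnf' : ∀ i, N.subtype (bN' i) = a i • bM (Fin.castLE hko i) := hsnf
  obtain rfl : o = n := by simpa using Fintype.card_congr (bM.indexEquiv b)
  obtain rfl : k = ℓ := by simpa using Fintype.card_congr (bN'.indexEquiv bN)
  have hmem : ∀ i, bM (Fin.castLE hko i) ∈ N := fun i => by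
    refine hN (a i) _ (fun h0 => bN'.ne_zero i ?_) (hsnf' i ▸ (bN' i).2)
    ext
    simpa [h0] using hsnf' i
  have hspan : span R (range (bM ∘ Fin.castLE hko)) = N := by
    refine le_antisymm (span_le.2 (range_subset_iff.2 hmem)) ?_
    conv_lhs => rw [← bN'.span_range_subtype_comp]
    refine span_le.2 <| range_subset_iff.2 fun i => ?_
    rw [Function.comp_apply, hsnf' i]
    exact smul_mem _ _ (subset_span (mem_range_self i))
  refine ⟨bM.reindex (finSumFinEquiv.trans (finCongr (by omega))).symm, ?_⟩
  convert hspan using 3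
  ext i
  simp only [Function.comp_apply, Basis.reindex_apply, Equiv.symm_symm, Equiv.trans_apply,
    finSumFinEquiv_apply_left]
  rfl

section InnerProductSpace

variable {E : Type*} [NormedAddCommGroup E] [InnerProductSpace ℝ E]

theorem mem_orthogonal_span_iff {s : Set E} {x : E} : x ∈ (span ℝ s)ᗮ ↔ ∀ u ∈ s, ⟪u, x⟫ = 0 := by
  refine ⟨fun h u hu => inner_right_of_mem_orthogonal (subset_span hu) h, fun h => ?_⟩
  have : span ℝ s ≤ (ℝ ∙ x)ᗮ :=
    span_le.2 fun u hu => mem_orthogonal_singleton_iff_inner_left.2 (h u hu)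
  exact orthogonal_le this (le_orthogonal_orthogonal _ (mem_span_singleton_self x))

theorem inter_span_inter_eq (A : Set E) (W : Submodule ℝ E) :
    A ∩ (span ℝ (A ∩ W) : Set E) = A ∩ W :=
  Subset.antisymm (fun _ hx => ⟨hx.1, span_le.2 inter_subset_right hx.2⟩)
    fun _ hx => ⟨hx.1, subset_span hx⟩

variable {ι κ : Type*} [Fintype ι]

theorem gram_eq_transpose_mul_gram_mul {v : ι → E} {w : κ → E} (P : Matrix ι κ ℝ)
    (hw : ∀ j, w j = ∑ i, P i j • v i) : gram ℝ w = Pᵀ * gram ℝ v * P := by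
  ext a b
  simp only [gram_apply, hw, sum_inner, inner_sum, real_inner_smul_left, real_inner_smul_right,
    mul_apply, transpose_apply, Finset.sum_mul]
  exact Finset.sum_congr rfl fun i _ => Finset.sum_congr rfl fun j _ => by ring

variable [Fintype κ] [DecidableEq ι] [DecidableEq κ]

theorem det_gram_basis_eq {M : Submodule ℤ E} (b : Basis ι ℤ M) (c : Basis κ ℤ M) :
    (gram ℝ fun k => (c k : E)).det = (gram ℝ fun i => (b i : E)).det := by
  set c' := c.reindex (c.indexEquiv b)
  have hc : (gram ℝ fun k => (c k : E)) =
      (gram ℝ fun i => (c' i : E)).submatrix (c.indexEquiv b) (c.indexEquiv b) := by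
    ext k l
    simp [c']
  set P : Matrix ι ι ℝ := (b.toMatrix c').map (Int.cast : ℤ → ℝ)
  have hP : ∀ j, (c' j : E) = ∑ i, P i j • (b i : E) := fun j => by
    simp only [P, map_apply, Int.cast_smul_eq_zsmul, ← Submodule.coe_smul, ← Submodule.coe_sum,
      b.sum_toMatrix_smul_self]
  -- a change of `ℤ`-basis is unimodular
  have hdetP : P.det ^ 2 = 1 := by
    have : P.det = (b.det c' : ℝ) := by
      rw [b.det_apply]; exact (RingHom.map_det (Int.castRingHom ℝ) _).symm
    rcases Int.isUnit_iff.mp (b.isUnit_det c') with h | h <;> simp [this, h]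
  rw [hc, det_submatrix_equiv_self, gram_eq_transpose_mul_gram_mul P hP, det_mul, det_mul,
    det_transpose]
  linear_combination (gram ℝ fun i => (b i : E)).det * hdetP

theorem det_gram_eq_of_span_int_eq {B : ι → E} {C : κ → E} (hB : LinearIndependent ℝ B)
    (hC : LinearIndependent ℝ C) (h : span ℤ (range C) = span ℤ (range B)) :
    (gram ℝ C).det = (gram ℝ B).det := by
  simpa using det_gram_basis_eq (Basis.span (hB.restrict_scalars' ℤ))
    ((Basis.span (hC.restrict_scalars' ℤ)).map (LinearEquiv.ofEq _ _ h))

theorem linearIndependent_coe_basis_span_int {B : ι → E} (hB : LinearIndependent ℝ B)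
    (c : Basis κ ℤ (span ℤ (range B))) : LinearIndependent ℝ fun k => (c k : E) := by
  refine linearIndependent_of_det_gram_ne_zero ?_
  rw [det_gram_basis_eq (Basis.span (hB.restrict_scalars' ℤ)) c]
  simpa using (posDef_gram_of_linearIndependent hB).det_pos.ne'

theorem span_int_inter_orthogonal_eq {C D : ι → E}
    (hCD : ∀ i j, ⟪C i, D j⟫ = if i = j then 1 else 0) (s : Set ι) :
    (span ℤ (range C) : Set E) ∩ (span ℝ (D '' s))ᗮ = span ℤ (C '' sᶜ) := by
  ext x
  constructor
  · rintro ⟨hx, hperp⟩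
    obtain ⟨c, rfl⟩ := (mem_span_range_iff_exists_fun ℤ).1 hx
    have hc : ∀ k ∈ s, c k = 0 := fun k hk => by
      have := inner_left_of_mem_orthogonal (subset_span (mem_image_of_mem D hk)) hperp
      simp_rw [sum_inner, ← Int.cast_smul_eq_zsmul ℝ, real_inner_smul_left, hCD] at this
      simpa using this
    refine sum_mem fun k _ => ?_
    by_cases hk : k ∈ s
    · simp [hc k hk]
    · exact smul_mem _ _ (subset_span (mem_image_of_mem C hk))
  · intro hx
    refine ⟨span_mono (image_subset_range _ _) hx, ?_⟩
    refine (span_le (p := (span ℝ (D '' s))ᗮ.restrictScalars ℤ)).2 ?_ hx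
    rintro _ ⟨k, hk, rfl⟩
    rw [SetLike.mem_coe, restrictScalars_mem, mem_orthogonal_span_iff]
    rintro _ ⟨j, hj, rfl⟩
    rw [real_inner_comm, hCD, if_neg (by rintro rfl; exact hk hj)]

def dualFamily (C : ι → E) : ι → E := fun i => ∑ j, (gram ℝ C)⁻¹ i j • C j

variable {C : ι → E}

theorem inner_dualFamily_left (hC : LinearIndependent ℝ C) (i k : ι) :
    ⟪dualFamily C i, C k⟫ = if i = k then 1 else 0 := by
  have : ⟪dualFamily C i, C k⟫ = ((gram ℝ C)⁻¹ * gram ℝ C) i k := by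
    simp [dualFamily, sum_inner, real_inner_smul_left, mul_apply]
  rw [this, nonsing_inv_mul _ (posDef_gram_of_linearIndependent hC).det_pos.ne'.isUnit, one_apply]

theorem inner_dualFamily_right (hC : LinearIndependent ℝ C) (i k : ι) :
    ⟪C i, dualFamily C k⟫ = if i = k then 1 else 0 := by
  rw [real_inner_comm, inner_dualFamily_left hC]
  exact if_congr eq_comm rfl rfl

theorem dualFamily_mem_span (i : ι) : dualFamily C i ∈ span ℝ (range C) :=
  sum_mem fun j _ => smul_mem _ _ (subset_span ⟨j, rfl⟩)

theorem eq_sum_inner_smul_dualFamily (hC : LinearIndependent ℝ C) {w : E}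
    (hw : w ∈ span ℝ (range C)) : w = ∑ j, ⟪w, C j⟫ • dualFamily C j := by
  set r := w - ∑ j, ⟪w, C j⟫ • dualFamily C j
  have hr : r ∈ span ℝ (range C) :=
    sub_mem hw (sum_mem fun j _ => smul_mem _ _ (dualFamily_mem_span j))
  have hperp : r ∈ (span ℝ (range C))ᗮ := by
    rw [mem_orthogonal_span_iff]
    rintro _ ⟨k, rfl⟩
    rw [real_inner_comm, inner_sub_left, sum_inner]
    simp [real_inner_smul_left, inner_dualFamily_left hC]
  exact sub_eq_zero.1 (inner_self_eq_zero.1 (inner_right_of_mem_orthogonal hr hperp))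

theorem gram_dualFamily (hC : LinearIndependent ℝ C) : gram ℝ (dualFamily C) = (gram ℝ C)⁻¹ := by
  ext i j
  have hsymm := (posDef_gram_of_linearIndependent hC).isHermitian.inv.apply i j
  show ⟪dualFamily C i, ∑ k, (gram ℝ C)⁻¹ j k • C k⟫ = _
  simpa [inner_sum, real_inner_smul_right, inner_dualFamily_left hC] using hsymm

theorem linearIndependent_dualFamily (hC : LinearIndependent ℝ C) :
    LinearIndependent ℝ (dualFamily C) :=
  linearIndependent_of_posDef_gram <| gram_dualFamily hC ▸ (posDef_gram_of_linearIndependent hC).inv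

theorem det_gram_dualFamily (hC : LinearIndependent ℝ C) :
    (gram ℝ (dualFamily C)).det = ((gram ℝ C).det)⁻¹ := by
  rw [gram_dualFamily hC, det_nonsing_inv, Ring.inverse_eq_inv']

theorem det_gram_dualFamily_comp_inr_mul {C : ι ⊕ κ → E} (hC : LinearIndependent ℝ C) :
    (gram ℝ (dualFamily C ∘ Sum.inr)).det * (gram ℝ C).det = (gram ℝ (C ∘ Sum.inl)).det := by
  have := det_toBlocks₂₂_inv_fromBlocks_mul_det (gram ℝ C).toBlocks₁₁ (gram ℝ C).toBlocks₁₂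
    (gram ℝ C).toBlocks₂₁ (gram ℝ C).toBlocks₂₂
    (posDef_gram_of_linearIndependent (hC.comp _ Sum.inl_injective)).det_pos.ne'.isUnit
  rw [fromBlocks_toBlocks, ← gram_dualFamily hC] at this
  exact this (posDef_gram_of_linearIndependent hC).det_pos.ne'.isUnit

end InnerProductSpace

/-- For `n = 0` both exponents are `0 / 0 = 0`, hence the hypothesis `hx₁`. -/
theorem div_inv_rpow_eq_div_rpow {n ℓ : ℕ} {x y z : ℝ} (hx : 0 < x) (hx₁ : n = 0 → x = 1)
    (hzy : z * x = y) : z / x⁻¹ ^ (((n : ℝ) - ℓ) / n) = y / x ^ ((ℓ : ℝ) / n) := by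
  rcases eq_or_ne n 0 with rfl | hn
  · simp [hx₁ rfl, ← hzy]
  have hsplit : x ^ (((n : ℝ) - ℓ) / n) * x ^ ((ℓ : ℝ) / n) = x := by
    rw [← Real.rpow_add hx, ← add_div, sub_add_cancel, div_self (by exact_mod_cast hn),
      Real.rpow_one]
  rw [Real.inv_rpow hx.le, div_inv_eq_mul, eq_div_iff (Real.rpow_pos_of_pos hx _).ne', mul_assoc,
    hsplit, hzy]

section Lattice

variable {d : ℕ}

theorem zspan_eq_span_int {n : ℕ} (B : Fin n → EuclideanSpace ℝ (Fin d)) :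
    zspan B = span ℤ (range B) := by
  ext x
  simp [zspan, mem_span_range_iff_exists_fun, Int.cast_smul_eq_zsmul, eq_comm]

theorem gramDet_pos {n : ℕ} {B : Fin n → EuclideanSpace ℝ (Fin d)} (hB : LinearIndependent ℝ B) :
    0 < gramDet B :=
  Real.sqrt_pos.2 (posDef_gram_of_linearIndependent hB).det_pos

theorem gramDet_eq_sqrt_det_gram {n : ℕ} {κ : Type*} [Fintype κ] [DecidableEq κ]
    {B : Fin n → EuclideanSpace ℝ (Fin d)} {C : κ → EuclideanSpace ℝ (Fin d)}
    (hB : LinearIndependent ℝ B) (hC : LinearIndependent ℝ C) (h : zspan B = span ℤ (range C)) :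
    gramDet B = √(gram ℝ C).det := by
  rw [zspan_eq_span_int] at h
  rw [gramDet, ← det_gram_eq_of_span_int_eq hC hB (SetLike.coe_injective h)]
  rfl

theorem dualSet_span_int {ι : Type*} [Fintype ι] [DecidableEq ι]
    {C : ι → EuclideanSpace ℝ (Fin d)} (hC : LinearIndependent ℝ C) :
    dualSet (span ℤ (range C) : Set (EuclideanSpace ℝ (Fin d))) =
      span ℤ (range (dualFamily C)) := by
  ext w
  rw [dualSet, mem_ofPred_eq, span_span_of_tower, SetLike.mem_coe]
  constructor
  · rintro ⟨hw, hint⟩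
    choose m hm using fun j => hint (C j) (subset_span (mem_range_self j))
    rw [eq_sum_inner_smul_dualFamily hC hw]
    refine sum_mem fun j _ => ?_
    rw [hm j, Int.cast_smul_eq_zsmul]
    exact zsmul_mem (subset_span (mem_range_self j)) _
  · intro hw
    have hspan : span ℤ (range (dualFamily C)) ≤ (span ℝ (range C)).restrictScalars ℤ :=
      span_le.2 (range_subset_iff.2 dualFamily_mem_span)
    refine ⟨hspan hw, fun y hy => ?_⟩
    obtain ⟨c, rfl⟩ := (mem_span_range_iff_exists_fun ℤ).1 hw
    obtain ⟨b, rfl⟩ := (mem_span_range_iff_exists_fun ℤ).1 (SetLike.mem_coe.1 hy)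
    refine ⟨∑ j, c j * b j, ?_⟩
    simp [← Int.cast_smul_eq_zsmul ℝ, sum_inner, inner_sum, real_inner_smul_left,
      real_inner_smul_right, inner_dualFamily_left hC, mul_comm]

theorem IsLattice.exists_basis_adapted {L L' : Set (EuclideanSpace ℝ (Fin d))} {n ℓ : ℕ}
    (hL : IsLattice L n) (hL' : IsLattice L' ℓ) (hsub : L' ⊆ L)
    (hprim : L' = L ∩ (span ℝ L' : Set (EuclideanSpace ℝ (Fin d)))) :
    ∃ C : Fin ℓ ⊕ Fin (n - ℓ) → EuclideanSpace ℝ (Fin d), LinearIndependent ℝ C ∧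
      L = span ℤ (range C) ∧ L' = span ℤ (range (C ∘ Sum.inl)) := by
  obtain ⟨B, hB, rfl⟩ := hL
  obtain ⟨B', hB', rfl⟩ := hL'
  simp only [zspan_eq_span_int] at hsub hprim ⊢
  set M := span ℤ (range B)
  set N := span ℤ (range B')
  have hNM : N ≤ M := hsub
  -- primitivity of `L'` says that `N` is saturated in `M`
  have hsat : ∀ (a : ℤ) (x : M), a ≠ 0 → a • x ∈ N.comap M.subtype → x ∈ N.comap M.subtype := by
    intro a x ha (hax : a • (x : EuclideanSpace ℝ (Fin d)) ∈ N)
    have hx : (x : EuclideanSpace ℝ (Fin d)) ∈ span ℝ (N : Set (EuclideanSpace ℝ (Fin d))) := by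
      have := smul_mem _ ((a : ℝ)⁻¹) (subset_span (R := ℝ) hax)
      simpa [← Int.cast_smul_eq_zsmul ℝ, smul_smul, ha] using this
    exact hprim.ge ⟨x.2, hx⟩
  obtain ⟨c, hc⟩ := exists_basis_span_range_inl_eq (Basis.span (hB.restrict_scalars' ℤ))
    ((Basis.span (hB'.restrict_scalars' ℤ)).map (comapSubtypeEquivOfLe hNM).symm) hsat
  refine ⟨M.subtype ∘ c, linearIndependent_coe_basis_span_int hB c, ?_, ?_⟩
  · rw [c.span_range_subtype_comp]
  · rw [Function.comp_assoc, range_comp, span_image, hc, map_comap_subtype, inf_eq_right.2 hNM]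

end Lattice

theorem stmt3 {d n ℓ : ℕ} (L L' L'' : Set (EuclideanSpace ℝ (Fin d)))
    (hL : IsLattice L n) (hL' : IsLattice L' ℓ) (hsub : L' ⊆ L)
    (hprim : L' = L ∩ (Submodule.span ℝ L' : Set (EuclideanSpace ℝ (Fin d))))
    (hL''def : L'' = dualSet L ∩ ((Submodule.span ℝ L')ᗮ : Set (EuclideanSpace ℝ (Fin d)))) :
    (L'' ⊆ dualSet L ∧ L'' = dualSet L ∩ (Submodule.span ℝ L'' : Set (EuclideanSpace ℝ (Fin d)))) ∧
    L ∩ ((Submodule.span ℝ L'')ᗮ : Set (EuclideanSpace ℝ (Fin d))) = L' ∧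
    (∀ (B : Fin n → EuclideanSpace ℝ (Fin d)) (B' : Fin ℓ → EuclideanSpace ℝ (Fin d))
        (D : Fin n → EuclideanSpace ℝ (Fin d)) (B'' : Fin (n - ℓ) → EuclideanSpace ℝ (Fin d)),
      LinearIndependent ℝ B → L = zspan B →
      LinearIndependent ℝ B' → L' = zspan B' →
      LinearIndependent ℝ D → dualSet L = zspan D →
      LinearIndependent ℝ B'' → L'' = zspan B'' →
      gramDet B'' / gramDet D ^ (((n : ℝ) - (ℓ : ℝ)) / (n : ℝ)) =
        gramDet B' / gramDet B ^ ((ℓ : ℝ) / (n : ℝ))) := by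
  obtain ⟨C, hC, hLC, hL'C⟩ := hL.exists_basis_adapted hL' hsub hprim
  set C' := dualFamily C
  have hC' : LinearIndependent ℝ C' := linearIndependent_dualFamily hC
  have hdual : dualSet L = span ℤ (range C') := hLC ▸ dualSet_span_int hC
  have hL''C : L'' = span ℤ (range (C' ∘ Sum.inr)) := by
    rw [hL''def, hdual, hL'C, span_span_of_tower, range_comp,
      span_int_inter_orthogonal_eq (inner_dualFamily_left hC), compl_range_inl, ← range_comp]
  refine ⟨⟨hL''def ▸ inter_subset_left, hL''def ▸ (inter_span_inter_eq _ _).symm⟩, ?_, ?_⟩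
  · rw [hL''C, hLC, hL'C, span_span_of_tower, range_comp,
      span_int_inter_orthogonal_eq (inner_dualFamily_right hC), compl_range_inr, ← range_comp]
  intro B B' D B'' hB hLB hB' hL'B' hD hDL hB'' hL''B''
  have hgB : gramDet B = √(gram ℝ C).det := gramDet_eq_sqrt_det_gram hB hC (hLB.symm.trans hLC)
  have hgD : gramDet D = (gramDet B)⁻¹ := by
    rw [gramDet_eq_sqrt_det_gram hD hC' (hDL.symm.trans hdual), det_gram_dualFamily hC,
      Real.sqrt_inv, hgB]
  have hgB'' : gramDet B'' * gramDet B = gramDet B' := by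
    rw [gramDet_eq_sqrt_det_gram hB'' (hC'.comp _ Sum.inr_injective) (hL''B''.symm.trans hL''C),
      gramDet_eq_sqrt_det_gram hB' (hC.comp _ Sum.inl_injective) (hL'B'.symm.trans hL'C), hgB,
      ← Real.sqrt_mul (posSemidef_gram ℝ _).det_nonneg, det_gram_dualFamily_comp_inr_mul hC]
  rw [hgD]
  exact div_inv_rpow_eq_div_rpow (gramDet_pos hB) (fun hn => by subst hn; simp [gramDet]) hgB''
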